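/- Assume λ < 0 and μ > 0. Then φ(π/μ, P⁺, u⁻) = P⁻ and φ(π/μ, P⁻, u⁺) = P⁺. Consequently, the curve x defined on [0, 2π/μ] by x(s) = φ(s, P⁺, u⁻) for s ∈ [0, π/μ] and x(s) = φ(s − π/μ, P⁻, u⁺) for s ∈ [π/μ, 2π/μ], extended (2π/μ)-periodically to ℝ, is a periodic trajectory of the system whose image is the set O := {φ(s, P⁺, u⁻) : s ∈ [0, π/μ]} ∪ {φ(s, P⁻, u⁺) : s ∈ [0, π/μ]}. -/

import Mathlib

noncomputable section

open Real Set RealInnerProductSpace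

/-- The Euclidean plane. -/
abbrev E2 : Type := EuclideanSpace ℝ (Fin 2)

/-- The vector `(a, b)` in the Euclidean plane. -/
def vec2 (a b : ℝ) : E2 := WithLp.toLp 2 ![a, b]

/-- Counterclockwise rotation of angle `φ`. -/
def rotMap (φ : ℝ) (v : E2) : E2 :=
  vec2 (Real.cos φ * v 0 - Real.sin φ * v 1) (Real.sin φ * v 0 + Real.cos φ * v 1)

/-- `θ`, the counterclockwise rotation by `π/2`. -/
def thetaMap (v : E2) : E2 := vec2 (-(v 1)) (v 0)

/-- The linear map with matrix `A = ((l, -m), (m, l))`. -/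
def Amap (l m : ℝ) (v : E2) : E2 := vec2 (l * v 0 - m * v 1) (m * v 0 + l * v 1)

/-- The inverse `A⁻¹` of the matrix `A = ((l, -m), (m, l))` (with `det A = l² + m² ≠ 0`). -/
def AinvMap (l m : ℝ) (v : E2) : E2 :=
  (1 / (l ^ 2 + m ^ 2)) • vec2 (l * v 0 + m * v 1) (-m * v 0 + l * v 1)

/-- The matrix exponential `e^{τA} = e^{τl} R_{τm}` for `A = ((l, -m), (m, l))`. -/
def expA (l m τ : ℝ) (v : E2) : E2 := Real.exp (τ * l) • rotMap (τ * m) v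

/-- The equilibrium `v(u) = -u A⁻¹ η`. -/
def equil (l m : ℝ) (η : E2) (u : ℝ) : E2 := (-u) • AinvMap l m η

/-- The solution `φ(s, v, u) = e^{sA}(v - v(u)) + v(u)` of `ẋ = Ax + uη` for constant control. -/
def phi (l m : ℝ) (η : E2) (s : ℝ) (v : E2) (u : ℝ) : E2 :=
  expA l m s (v - equil l m η u) + equil l m η u

/-- The spiral `φ_A(τ, v₁, v₂) = e^{τA}(v₁ - v₂) + v₂`. -/
def phiA (l m : ℝ) (τ : ℝ) (v₁ v₂ : E2) : E2 := expA l m τ (v₁ - v₂) + v₂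

/-- The region `C_A(v₁, v₂)`. -/
def CA (l m : ℝ) (v₁ v₂ : E2) : Set E2 :=
  {v | 0 ≤ ⟪v - v₂, thetaMap (v₁ - v₂)⟫ ∧
    ∀ τ ∈ Icc (0 : ℝ) (π / m),
      0 ≤ ⟪v - phiA l m τ v₁ v₂, thetaMap (Amap l m (expA l m τ (v₁ - v₂)))⟫}

/-- Concatenated solution associated to a finite list of (time, control) pairs. -/
def trajComp (l m : ℝ) (η : E2) : E2 → List (ℝ × ℝ) → E2
  | v, [] => v
  | v, p :: rest => trajComp l m η (phi l m η p.1 v p.2) rest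

/-- The forward reachable set `R⁺(v)`. -/
def ReachPlus (l m : ℝ) (η : E2) (Ω : Set ℝ) (v : E2) : Set E2 :=
  {w | ∃ L : List (ℝ × ℝ), (∀ p ∈ L, 0 ≤ p.1 ∧ p.2 ∈ Ω) ∧ w = trajComp l m η v L}

/-- The backward reachable set `R⁻(v)` (forward reachable set of the time-reversed system). -/
def ReachMinus (l m : ℝ) (η : E2) (Ω : Set ℝ) (v : E2) : Set E2 :=
  {w | ∃ L : List (ℝ × ℝ), (∀ p ∈ L, p.1 ≤ 0 ∧ p.2 ∈ Ω) ∧ w = trajComp l m η v L}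

/-- An admissible trajectory of the system starting at `v`. -/
def IsAdmissibleTraj (l m : ℝ) (η : E2) (Ω : Set ℝ) (v : E2) (x : ℝ → E2) : Prop :=
  x 0 = v ∧
  ∃ t : ℕ → ℝ, t 0 = 0 ∧ StrictMono t ∧ (∀ M : ℝ, ∃ n, M < t n) ∧
    ∃ u : ℕ → ℝ, (∀ k, u k ∈ Ω) ∧
      ∀ k, ∀ s ∈ Icc (t k) (t (k + 1)), x s = phi l m η (s - t k) (x (t k)) (u k)

/-- An admissible trajectory of the time-reversed system starting at `v`. -/
def IsAdmissibleTrajRev (l m : ℝ) (η : E2) (Ω : Set ℝ) (v : E2) (x : ℝ → E2) : Prop :=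
  x 0 = v ∧
  ∃ t : ℕ → ℝ, t 0 = 0 ∧ StrictMono t ∧ (∀ M : ℝ, ∃ n, M < t n) ∧
    ∃ u : ℕ → ℝ, (∀ k, u k ∈ Ω) ∧
      ∀ k, ∀ s ∈ Icc (t k) (t (k + 1)), x s = phi l m η (-(s - t k)) (x (t k)) (u k)

/-- Conditions (a) and (b) of the definition of a control set. -/
def ControlSetAxioms (l m : ℝ) (η : E2) (Ω : Set ℝ) (D : Set E2) : Prop :=
  (∀ v ∈ D, ∃ x : ℝ → E2, IsAdmissibleTraj l m η Ω v x ∧ ∀ s : ℝ, 0 ≤ s → x s ∈ D) ∧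
  ∀ v ∈ D, D ⊆ closure (ReachPlus l m η Ω v)

/-- A control set: a set satisfying (a) and (b), maximal with respect to set inclusion. -/
def IsControlSet (l m : ℝ) (η : E2) (Ω : Set ℝ) (D : Set E2) : Prop :=
  ControlSetAxioms l m η Ω D ∧
    ∀ D' : Set E2, ControlSetAxioms l m η Ω D' → D ⊆ D' → D' = D

/-- Conditions (a) and (b) of the definition of a control set of the time-reversed system. -/
def ControlSetAxiomsRev (l m : ℝ) (η : E2) (Ω : Set ℝ) (D : Set E2) : Prop :=
  (∀ v ∈ D, ∃ x : ℝ → E2, IsAdmissibleTrajRev l m η Ω v x ∧ ∀ s : ℝ, 0 ≤ s → x s ∈ D) ∧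
  ∀ v ∈ D, D ⊆ closure (ReachMinus l m η Ω v)

/-- A control set of the time-reversed system. -/
def IsControlSetRev (l m : ℝ) (η : E2) (Ω : Set ℝ) (D : Set E2) : Prop :=
  ControlSetAxiomsRev l m η Ω D ∧
    ∀ D' : Set E2, ControlSetAxiomsRev l m η Ω D' → D ⊆ D' → D' = D

/-- `ρ = e^{πλ/μ}`. -/
def rho (l m : ℝ) : ℝ := Real.exp (π * l / m)

/-- The point `P⁺ = ((-u⁺ + ρ u⁻)/(1 - ρ)) A⁻¹ η`. -/
def Pplus (l m : ℝ) (η : E2) (um up : ℝ) : E2 :=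
  ((-up + rho l m * um) / (1 - rho l m)) • AinvMap l m η

/-- The point `P⁻ = ((-u⁻ + ρ u⁺)/(1 - ρ)) A⁻¹ η`. -/
def Pminus (l m : ℝ) (η : E2) (um up : ℝ) : E2 :=
  ((-um + rho l m * up) / (1 - rho l m)) • AinvMap l m η

/-- The region `C = C_A(P⁺, v(u⁻)) ∪ C_A(P⁻, v(u⁺))`. -/
def regionC (l m : ℝ) (η : E2) (um up : ℝ) : Set E2 :=
  CA l m (Pplus l m η um up) (equil l m η um) ∪ CA l m (Pminus l m η um up) (equil l m η up)

/-- The sequence `P₀ = v(u⁺)`, `P_{2n+1} = φ(π/μ, P_{2n}, u⁻)`, `P_{2n+2} = φ(π/μ, P_{2n+1}, u⁺)`. -/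
def Pseq (l m : ℝ) (η : E2) (um up : ℝ) : ℕ → E2
  | 0 => equil l m η up
  | n + 1 => phi l m η (π / m) (Pseq l m η um up n) (if n % 2 = 0 then um else up)

/-- The periodic orbit `O`. -/
def orbitO (l m : ℝ) (η : E2) (um up : ℝ) : Set E2 :=
  (fun s => phi l m η s (Pplus l m η um up) um) '' Icc (0 : ℝ) (π / m) ∪
    (fun s => phi l m η s (Pminus l m η um up) up) '' Icc (0 : ℝ) (π / m)

/-!
Since `e^{(π/μ)A} = e^{πλ/μ} R_π = -ρ`, the half-turn map is the affine map
`φ(π/μ, v, u) = -ρ v + (1 + ρ) v(u)`, and `P⁺ ↦ P⁻ ↦ P⁺` is a direct computation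
(`ρ ≠ 1` as `λ < 0`). Gluing the arc from `P⁺` under `u⁻` to the arc from `P⁻` under `u⁺`
therefore gives a closed curve, driven by the bang-bang control alternating `u⁻, u⁺` on the
intervals `[kπ/μ, (k+1)π/μ]`.
-/

section SwitchCurve

variable {α : Type*} {T : ℝ} (hT : 0 < T) (f g : ℝ → α)

def switchCurve (s : ℝ) : α :=
  let r := toIcoMod (mul_pos two_pos hT) 0 s
  if r ≤ T then f r else g (r - T)

theorem switchCurve_periodic : Function.Periodic (switchCurve hT f g) (2 * T) := fun s => by
  simp only [switchCurve, toIcoMod_add_right]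

variable {hT f g}

theorem switchCurve_of_mem_Icc {s : ℝ} (hs : s ∈ Icc 0 T) : switchCurve hT f g s = f s := by
  have hr : toIcoMod (mul_pos two_pos hT) 0 s = s :=
    toIcoMod_eq_self _ |>.mpr ⟨hs.1, by linarith [hs.2]⟩
  simp only [switchCurve, hr, if_pos hs.2]

theorem switchCurve_of_mem_Icc_even {j : ℕ} {s : ℝ}
    (hs : s ∈ Icc (2 * j * T) ((2 * j + 1) * T)) :
    switchCurve hT f g s = f (s - 2 * j * T) := by
  rw [← (switchCurve_periodic hT f g).sub_nat_mul_eq j, switchCurve_of_mem_Icc]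
  · ring_nf
  · constructor <;> nlinarith [hs.1, hs.2]

theorem switchCurve_of_mem_Icc_two_mul (hfg : f T = g 0) (hgf : g T = f 0) {s : ℝ}
    (hs : s ∈ Icc T (2 * T)) :
    switchCurve hT f g s = g (s - T) := by
  rcases hs.2.eq_or_lt with rfl | hs₂
  · rw [← zero_add (2 * T), switchCurve_periodic, switchCurve_of_mem_Icc ⟨le_rfl, hT.le⟩,
      zero_add, two_mul, add_sub_cancel_right, hgf]
  have hr : toIcoMod (mul_pos two_pos hT) 0 s = s :=
    toIcoMod_eq_self _ |>.mpr ⟨by linarith [hs.1], by linarith⟩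
  rcases hs.1.eq_or_lt with rfl | hs₁
  · simp only [switchCurve, hr, le_refl, if_true, sub_self, hfg]
  · simp only [switchCurve, hr, if_neg hs₁.not_ge]

theorem switchCurve_of_mem_Icc_odd (hfg : f T = g 0) (hgf : g T = f 0) {j : ℕ} {s : ℝ}
    (hs : s ∈ Icc ((2 * j + 1) * T) ((2 * j + 2) * T)) :
    switchCurve hT f g s = g (s - (2 * j + 1) * T) := by
  rw [← (switchCurve_periodic hT f g).sub_nat_mul_eq j, switchCurve_of_mem_Icc_two_mul hfg hgf]
  · ring_nf
  · constructor <;> nlinarith [hs.1, hs.2]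

theorem switchCurve_image_Ici (hfg : f T = g 0) (hgf : g T = f 0) :
    switchCurve hT f g '' Ici 0 = f '' Icc 0 T ∪ g '' Icc 0 T := by
  ext w
  constructor
  · rintro ⟨s, -, rfl⟩
    obtain ⟨hr₀, hr₁⟩ := toIcoMod_mem_Ico (mul_pos two_pos hT) 0 s
    by_cases hr : toIcoMod (mul_pos two_pos hT) 0 s ≤ T
    · exact Or.inl ⟨_, ⟨hr₀, hr⟩, by simp only [switchCurve, if_pos hr]⟩
    · refine Or.inr ⟨toIcoMod (mul_pos two_pos hT) 0 s - T,
        ⟨by linarith [not_le.mp hr], by linarith⟩, ?_⟩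
      simp only [switchCurve, if_neg hr]
  · rintro (⟨σ, hσ, rfl⟩ | ⟨σ, hσ, rfl⟩)
    · exact ⟨σ, hσ.1, switchCurve_of_mem_Icc hσ⟩
    · refine ⟨σ + T, by simp only [mem_Ici]; linarith [hσ.1], ?_⟩
      rw [switchCurve_of_mem_Icc_two_mul hfg hgf ⟨by linarith [hσ.1], by linarith [hσ.2]⟩,
        add_sub_cancel_right]

end SwitchCurve

theorem phi_zero (l m : ℝ) (η v : E2) (u : ℝ) : phi l m η 0 v u = v := by
  ext i
  fin_cases i <;> simp [phi, expA, rotMap, vec2]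

section HalfTurn

variable {l m : ℝ} {η : E2}

theorem phi_pi_div (hm : m ≠ 0) (v : E2) (u : ℝ) :
    phi l m η (π / m) v u = (-rho l m) • v + (1 + rho l m) • equil l m η u := by
  have hπ : π / m * m = π := div_mul_cancel₀ π hm
  have hρ : π / m * l = π * l / m := by ring
  ext i
  fin_cases i <;> simp [phi, expA, rotMap, vec2, rho, hπ, hρ] <;> ring

theorem rho_lt_one (hl : l < 0) (hm : 0 < m) : rho l m < 1 :=
  Real.exp_lt_one_iff.mpr (div_neg_of_neg_of_pos (mul_neg_of_pos_of_neg pi_pos hl) hm)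

theorem Pminus_eq_Pplus_swap (um up : ℝ) : Pminus l m η um up = Pplus l m η up um := rfl

theorem phi_pi_div_Pplus (hl : l < 0) (hm : 0 < m) (um up : ℝ) :
    phi l m η (π / m) (Pplus l m η um up) um = Pminus l m η um up := by
  have hρ : 1 - rho l m ≠ 0 := sub_ne_zero.mpr (rho_lt_one hl hm).ne'
  rw [phi_pi_div hm.ne', Pplus, Pminus, equil, smul_smul, smul_smul, ← add_smul]
  congr 1
  field_simp
  ring

end HalfTurn

theorem isAdmissibleTraj_switchCurve {l m : ℝ} {η : E2} {Ω : Set ℝ} {T : ℝ} (hT : 0 < T)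
    {P Q : E2} {u₁ u₂ : ℝ} (hu₁ : u₁ ∈ Ω) (hu₂ : u₂ ∈ Ω)
    (hPQ : phi l m η T P u₁ = Q) (hQP : phi l m η T Q u₂ = P) :
    IsAdmissibleTraj l m η Ω P
      (switchCurve hT (fun s => phi l m η s P u₁) (fun s => phi l m η s Q u₂)) := by
  have hfg := hPQ.trans (phi_zero l m η Q u₂).symm
  have hgf := hQP.trans (phi_zero l m η P u₁).symm
  refine ⟨by rw [switchCurve_of_mem_Icc ⟨le_rfl, hT.le⟩, phi_zero], fun k => k * T, by simp,
    fun a b hab => mul_lt_mul_of_pos_right (Nat.cast_lt.mpr hab) hT, fun M => ?_,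
    fun k => if Even k then u₁ else u₂,
    fun k => by dsimp only; split_ifs <;> assumption, fun k s hs => ?_⟩
  · obtain ⟨n, hn⟩ := exists_nat_gt (M / T)
    exact ⟨n, (div_lt_iff₀ hT).mp hn⟩
  rcases Nat.even_or_odd' k with ⟨j, rfl | rfl⟩
  · push_cast at hs ⊢
    rw [switchCurve_of_mem_Icc_even hs, switchCurve_of_mem_Icc_even ⟨le_rfl, by linarith⟩,
      if_pos (even_two_mul j), sub_self, phi_zero]
  · push_cast at hs ⊢
    rw [switchCurve_of_mem_Icc_odd hfg hgf (by ring_nf at hs ⊢; exact hs),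
      switchCurve_of_mem_Icc_odd hfg hgf ⟨le_rfl, by linarith⟩,
      if_neg (Nat.not_even_two_mul_add_one j), sub_self, phi_zero]

theorem stmt6_general (l m : ℝ) (hl : l < 0) (hm : 0 < m) (η : E2)
    (um up : ℝ) (hu : um < up) :
    phi l m η (π / m) (Pplus l m η um up) um = Pminus l m η um up ∧
    phi l m η (π / m) (Pminus l m η um up) up = Pplus l m η um up ∧
    ∃ x : ℝ → E2,
      IsAdmissibleTraj l m η (Icc um up) (Pplus l m η um up) x ∧
      Function.Periodic x (2 * π / m) ∧
      (∀ s ∈ Icc (0 : ℝ) (π / m), x s = phi l m η s (Pplus l m η um up) um) ∧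
      (∀ s ∈ Icc (π / m) (2 * π / m), x s = phi l m η (s - π / m) (Pminus l m η um up) up) ∧
      x '' Ici (0 : ℝ) = orbitO l m η um up := by
  have hT : 0 < π / m := div_pos pi_pos hm
  have h2T : 2 * π / m = 2 * (π / m) := mul_div_assoc _ _ _
  have hPQ := phi_pi_div_Pplus (η := η) hl hm um up
  have hQP : phi l m η (π / m) (Pminus l m η um up) up = Pplus l m η um up := by
    simpa only [Pminus_eq_Pplus_swap] using phi_pi_div_Pplus (η := η) hl hm up um
  have hfg := hPQ.trans (phi_zero l m η _ up).symm
  have hgf := hQP.trans (phi_zero l m η _ um).symm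
  refine ⟨hPQ, hQP, _,
    isAdmissibleTraj_switchCurve hT ⟨le_rfl, hu.le⟩ ⟨hu.le, le_rfl⟩ hPQ hQP,
    h2T ▸ switchCurve_periodic hT _ _, fun s hs => switchCurve_of_mem_Icc hs,
    fun s hs => switchCurve_of_mem_Icc_two_mul hfg hgf (h2T ▸ hs),
    switchCurve_image_Ici hfg hgf⟩

/-- `φ(π/μ, P⁺, u⁻) = P⁻`, `φ(π/μ, P⁻, u⁺) = P⁺`, and the corresponding
`(2π/μ)`-periodic curve is a periodic trajectory of the system whose image is `O`. -/
theorem stmt6 (l m : ℝ) (hl : l < 0) (hm : 0 < m) (η : E2) (hη : η ≠ 0)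
    (um up : ℝ) (hu : um < up) :
    phi l m η (π / m) (Pplus l m η um up) um = Pminus l m η um up ∧
    phi l m η (π / m) (Pminus l m η um up) up = Pplus l m η um up ∧
    ∃ x : ℝ → E2,
      IsAdmissibleTraj l m η (Icc um up) (Pplus l m η um up) x ∧
      Function.Periodic x (2 * π / m) ∧
      (∀ s ∈ Icc (0 : ℝ) (π / m), x s = phi l m η s (Pplus l m η um up) um) ∧
      (∀ s ∈ Icc (π / m) (2 * π / m), x s = phi l m η (s - π / m) (Pminus l m η um up) up) ∧
      x '' Ici (0 : ℝ) = orbitO l m η um up :=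
  stmt6_general l m hl hm η um up hu
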